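/- Let L ⊆ (V×ℝʰ)⊕(V*×ℝʰ) be maximally isotropic for the neutral pairing G, and let V₁,…,V_k ∈ V. Then L̂ = {(X − w·𝐕, u, α(𝐕)) ⊕ (α, v, w) : (X,u)⊕(α,v) ∈ L, w ∈ ℝᵏ} (where w·𝐕 = Σ_p wᵖ V_p and α(𝐕) = (α(V_p)) ∈ ℝᵏ) is a maximally isotropic subspace of (V×ℝʰ⁺ᵏ)⊕(V*×ℝʰ⁺ᵏ). -/

import Mathlib

open scoped BigOperators

/-- The neutral pairing on the stable big space of index `h`. -/
noncomputable def stablePairing (V : Type*) [AddCommGroup V] [Module ℝ V] (h : ℕ)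
    (p q : (V × (Fin h → ℝ)) × (Module.Dual ℝ V × (Fin h → ℝ))) : ℝ :=
  (1 / 2) * (q.2.1 p.1.1 + p.2.1 q.1.1 +
    ∑ a, p.1.2 a * q.2.2 a + ∑ a, q.1.2 a * p.2.2 a)

/-- The neutral pairing on the stable big space of index `h + k`, with
`ℝ^{h+k}` modelled by `(Fin h → ℝ) × (Fin k → ℝ)`. -/
noncomputable def stablePairing2 (V : Type*) [AddCommGroup V] [Module ℝ V]
    (h k : ℕ)
    (p q : (V × ((Fin h → ℝ) × (Fin k → ℝ))) ×
      (Module.Dual ℝ V × ((Fin h → ℝ) × (Fin k → ℝ)))) : ℝ :=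
  (1 / 2) * (q.2.1 p.1.1 + p.2.1 q.1.1 +
    (∑ a, p.1.2.1 a * q.2.2.1 a + ∑ b, p.1.2.2 b * q.2.2.2 b) +
    (∑ a, q.1.2.1 a * p.2.2.1 a + ∑ b, q.1.2.2 b * p.2.2.2 b))

/-!
The prolongation map `((X, u), (α, v)), w ↦ ((X - w·𝐕, (u, α(𝐕))), (α, (v, w)))` is injective
(`α` and `w` can be read off the image, and then `X`), and preserves the neutral pairing: the
cross terms `-α(w'·𝐕)` coming from the shifted vector part cancel against the new Euclidean terms
`α(𝐕)·w'`. Hence `L̂`, the image of `L × ℝᵏ`, is isotropic of dimension `dim L + k`.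
-/

namespace Prolongation

variable {V : Type*} [AddCommGroup V] [Module ℝ V] {h k : ℕ} (Vv : Fin k → V)

noncomputable def prolong :
    (((V × (Fin h → ℝ)) × (Module.Dual ℝ V × (Fin h → ℝ))) × (Fin k → ℝ)) →ₗ[ℝ]
    ((V × ((Fin h → ℝ) × (Fin k → ℝ))) ×
      (Module.Dual ℝ V × ((Fin h → ℝ) × (Fin k → ℝ)))) where
  toFun pw := ((pw.1.1.1 - ∑ i, pw.2 i • Vv i, (pw.1.1.2, fun i => pw.1.2.1 (Vv i))),
    (pw.1.2.1, (pw.1.2.2, pw.2)))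
  map_add' x y := by
    ext <;> simp [Finset.sum_add_distrib, add_smul, sub_add_sub_comm]
  map_smul' r x := by
    ext <;> simp [Finset.smul_sum, smul_smul, smul_sub]

theorem prolong_injective :
    Function.Injective (prolong (h := h) Vv) := by
  let retract : ((V × ((Fin h → ℝ) × (Fin k → ℝ))) ×
      (Module.Dual ℝ V × ((Fin h → ℝ) × (Fin k → ℝ)))) →
      ((V × (Fin h → ℝ)) × (Module.Dual ℝ V × (Fin h → ℝ))) × (Fin k → ℝ) :=
    fun p => (((p.1.1 + ∑ i, p.2.2.2 i • Vv i, p.1.2.1), (p.2.1, p.2.2.1)), p.2.2.2)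
  refine Function.LeftInverse.injective (g := retract) fun pw => ?_
  simp [retract, prolong]

theorem stablePairing2_prolong (p q : (V × (Fin h → ℝ)) ×
    (Module.Dual ℝ V × (Fin h → ℝ))) (w w' : Fin k → ℝ) :
    stablePairing2 V h k (prolong Vv (p, w)) (prolong Vv (q, w')) = stablePairing V h p q := by
  simp only [stablePairing2, stablePairing, prolong, LinearMap.coe_mk, AddHom.coe_mk, map_sub,
    map_sum, map_smul, smul_eq_mul]
  have hp : ∑ b, p.2.1 (Vv b) * w' b = ∑ b, w' b * p.2.1 (Vv b) :=
    Finset.sum_congr rfl fun b _ => mul_comm _ _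
  have hq : ∑ b, q.2.1 (Vv b) * w b = ∑ b, w b * q.2.1 (Vv b) :=
    Finset.sum_congr rfl fun b _ => mul_comm _ _
  linear_combination (1 / 2) * hp + (1 / 2) * hq

variable (L : Submodule ℝ ((V × (Fin h → ℝ)) × (Module.Dual ℝ V × (Fin h → ℝ))))

noncomputable def prolongation :
    Submodule ℝ ((V × ((Fin h → ℝ) × (Fin k → ℝ))) ×
      (Module.Dual ℝ V × ((Fin h → ℝ) × (Fin k → ℝ)))) :=
  LinearMap.range (prolong Vv ∘ₗ L.subtype.prodMap LinearMap.id)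

theorem mem_prolongation {p : (V × ((Fin h → ℝ) × (Fin k → ℝ))) ×
    (Module.Dual ℝ V × ((Fin h → ℝ) × (Fin k → ℝ)))} :
    p ∈ prolongation Vv L ↔ ∃ (X : V) (u : Fin h → ℝ) (α : Module.Dual ℝ V) (v : Fin h → ℝ)
      (w : Fin k → ℝ), ((X, u), (α, v)) ∈ L ∧
        p = ((X - ∑ i, w i • Vv i, (u, fun i => α (Vv i))), (α, (v, w))) := by
  constructor
  · rintro ⟨⟨⟨⟨⟨X, u⟩, ⟨α, v⟩⟩, hmem⟩, w⟩, rfl⟩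
    exact ⟨X, u, α, v, w, hmem, rfl⟩
  · rintro ⟨X, u, α, v, w, hmem, rfl⟩
    exact ⟨(⟨_, hmem⟩, w), rfl⟩

theorem stablePairing2_eq_zero_of_mem_prolongation
    (hL : ∀ p ∈ L, ∀ q ∈ L, stablePairing V h p q = 0) :
    ∀ p ∈ prolongation Vv L, ∀ q ∈ prolongation Vv L, stablePairing2 V h k p q = 0 := by
  rintro _ ⟨⟨p, w⟩, rfl⟩ _ ⟨⟨q, w'⟩, rfl⟩
  simp only [LinearMap.comp_apply, LinearMap.prodMap_apply, Submodule.subtype_apply,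
    LinearMap.id_apply, stablePairing2_prolong]
  exact hL p p.2 q q.2

theorem finrank_prolongation [FiniteDimensional ℝ V] :
    Module.finrank ℝ (prolongation Vv L) = Module.finrank ℝ L + k := by
  have : Module.Free ℝ L := Module.Free.of_divisionRing ℝ L
  rw [prolongation, LinearMap.finrank_range_of_inj, Module.finrank_prod, Module.finrank_fin_fun]
  exact (prolong_injective Vv).comp (Subtype.val_injective.prodMap Function.injective_id)

end Prolongation

open Prolongation in
theorem stmt15 (V : Type*) [AddCommGroup V] [Module ℝ V] [FiniteDimensional ℝ V]
    (h k : ℕ) (Vv : Fin k → V)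
    (L : Submodule ℝ ((V × (Fin h → ℝ)) × (Module.Dual ℝ V × (Fin h → ℝ))))
    (hLiso : ∀ p ∈ L, ∀ q ∈ L, stablePairing V h p q = 0)
    (hLrk : Module.finrank ℝ L = Module.finrank ℝ V + h)
    (Lhat : Submodule ℝ ((V × ((Fin h → ℝ) × (Fin k → ℝ))) ×
      (Module.Dual ℝ V × ((Fin h → ℝ) × (Fin k → ℝ)))))
    (hLhat : ∀ p, p ∈ Lhat ↔ ∃ (X : V) (u : Fin h → ℝ)
      (α : Module.Dual ℝ V) (v : Fin h → ℝ) (w : Fin k → ℝ),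
        ((X, u), (α, v)) ∈ L ∧
        p = ((X - ∑ i, w i • Vv i, (u, fun i => α (Vv i))), (α, (v, w)))) :
    (∀ p ∈ Lhat, ∀ q ∈ Lhat, stablePairing2 V h k p q = 0) ∧
    Module.finrank ℝ Lhat = Module.finrank ℝ V + (h + k) := by
  obtain rfl : Lhat = prolongation Vv L :=
    SetLike.ext fun p => (hLhat p).trans (mem_prolongation Vv L).symm
  refine ⟨stablePairing2_eq_zero_of_mem_prolongation Vv L hLiso, ?_⟩
  rw [finrank_prolongation, hLrk, add_assoc]
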